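/- Let Ω ⊆ ℂ^m be a nonempty bounded connected open set and let f : Ω × Ω → ℂ be a function such that the map (z, w) ↦ f(z, w̄) is holomorphic (jointly complex differentiable) on Ω × Ω*, where Ω* := { w̄ : w ∈ Ω } and w̄ denotes componentwise complex conjugation. If f(z, z) = 0 for all z ∈ Ω, then f(z, w) = 0 for all (z, w) ∈ Ω × Ω. -/

import Mathlib

/-!
Put `g (z, w) = f (z, w̄)`: it is holomorphic on `Ω × Ω̄` and vanishes on the totally real set of
points `(z, z̄)`, the fixed points of the conjugation `(u, v) ↦ (v̄, ū)`. On a ball around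
`(z₀, z̄₀)`, which this conjugation preserves, every point is `a + i b` with `a` in the ball and
`a`, `b` fixed by the conjugation, and `t ↦ g (a + t b)` is a holomorphic function of one variable
vanishing for real `t`, hence at `t = i`. So `g` vanishes near `(z₀, z̄₀)`, and then on the
connected set `Ω × Ω̄` by the identity theorem, which follows from the one-variable one by
restriction to complex lines.
-/

open Complex Filter Set Topology

section Line

variable {E G : Type*} [NormedAddCommGroup E] [NormedSpace ℂ E]
  [NormedAddCommGroup G] [NormedSpace ℂ G] [CompleteSpace G]

theorem Convex.setOf_add_smul_mem {U : Set E} (hU : Convex ℝ U) (a b : E) :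
    Convex ℝ {t : ℂ | a + t • b ∈ U} :=
  (hU.translate_preimage_right a).is_linear_preimage
    ⟨fun s t => add_smul s t b, fun r t => smul_assoc r t b⟩

theorem DifferentiableOn.apply_add_smul_eq_zero_of_frequently {U : Set E} {F : E → G}
    (hF : DifferentiableOn ℂ F U) (hUo : IsOpen U) (hUc : Convex ℝ U) {a b : E} {t₀ t : ℂ}
    (ht₀ : a + t₀ • b ∈ U) (hfreq : ∃ᶠ s in 𝓝[≠] t₀, F (a + s • b) = 0)
    (ht : a + t • b ∈ U) : F (a + t • b) = 0 := by
  have hline : Differentiable ℂ fun s : ℂ => a + s • b :=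
    (differentiable_id.smul_const b).const_add a
  have hanalytic := (hF.comp hline.differentiableOn fun _ hs => hs).analyticOnNhd
    (hUo.preimage hline.continuous)
  exact hanalytic.eqOn_zero_of_preconnected_of_frequently_eq_zero
    (hUc.setOf_add_smul_mem a b).isPreconnected ht₀ hfreq ht

theorem DifferentiableOn.eqOn_zero_of_convex_of_eventuallyEq_zero {U : Set E} {F : E → G}
    (hF : DifferentiableOn ℂ F U) (hUo : IsOpen U) (hUc : Convex ℝ U) {y : E} (hy : y ∈ U)
    (hev : F =ᶠ[𝓝 y] 0) : EqOn F 0 U := by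
  intro z hz
  have hline : Tendsto (fun s : ℂ => y + s • (z - y)) (𝓝 0) (𝓝 y) := by
    simpa using ((continuous_id.smul continuous_const).const_add y).tendsto (0 : ℂ)
  have hfreq : ∃ᶠ s in 𝓝[≠] (0 : ℂ), F (y + s • (z - y)) = 0 :=
    ((hline.eventually hev).filter_mono nhdsWithin_le_nhds).frequently
  simpa using hF.apply_add_smul_eq_zero_of_frequently hUo hUc (t₀ := 0) (t := 1)
    (by simpa using hy) hfreq (by simpa using hz)

theorem DifferentiableOn.eqOn_zero_of_preconnected_of_eventuallyEq_zero {U : Set E}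
    {F : E → G} (hF : DifferentiableOn ℂ F U) (hUo : IsOpen U) (hUc : IsPreconnected U)
    {y : E} (hy : y ∈ U) (hev : F =ᶠ[𝓝 y] 0) : EqOn F 0 U := by
  have hU : U ⊆ {x | F =ᶠ[𝓝 x] 0} := by
    refine hUc.subset_of_closure_inter_subset isOpen_setOfPred_eventually_nhds ⟨y, hy, hev⟩ ?_
    rintro x ⟨hx, hxU⟩
    obtain ⟨r, hr, hball⟩ := Metric.isOpen_iff.1 hUo x hxU
    obtain ⟨x', hx', hxx'⟩ := Metric.mem_closure_iff.1 hx r hr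
    exact eventuallyEq_of_mem (Metric.ball_mem_nhds x hr)
      ((hF.mono hball).eqOn_zero_of_convex_of_eventuallyEq_zero Metric.isOpen_ball
        (convex_ball x r) (Metric.mem_ball'.2 hxx') hx')
  exact fun x hx => (hU hx).self_of_nhds

theorem DifferentiableOn.apply_add_I_smul_eq_zero {U : Set E} {F : E → G}
    (hF : DifferentiableOn ℂ F U) (hUo : IsOpen U) (hUc : Convex ℝ U) {a b : E} (ha : a ∈ U)
    (hb : a + I • b ∈ U) (hreal : ∀ t : ℝ, a + (t : ℂ) • b ∈ U → F (a + (t : ℂ) • b) = 0) :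
    F (a + I • b) = 0 := by
  have hnear : ∀ᶠ t : ℝ in 𝓝 0, a + (t : ℂ) • b ∈ U := by
    have hcont : Continuous fun t : ℝ => a + (t : ℂ) • b := by fun_prop
    exact hcont.continuousAt.preimage_mem_nhds (by simpa using hUo.mem_nhds ha)
  have hofReal : Tendsto ((↑) : ℝ → ℂ) (𝓝[≠] 0) (𝓝[≠] 0) := by
    have := continuous_ofReal.continuousWithinAt.tendsto_nhdsWithin (x := 0) (s := {0}ᶜ)
      (t := {0}ᶜ) fun _ ht => ofReal_ne_zero.2 ht
    rwa [ofReal_zero] at this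
  refine hF.apply_add_smul_eq_zero_of_frequently hUo hUc (t₀ := 0) (by simpa using ha) ?_ hb
  exact hofReal.frequently
    ((hnear.filter_mono nhdsWithin_le_nhds).frequently.mono hreal)

end Line

section Conjugation

variable {E G : Type*} [NormedAddCommGroup E] [NormedSpace ℂ E] [StarAddMonoid E]
  [StarModule ℂ E] [NormedAddCommGroup G] [NormedSpace ℂ G] [CompleteSpace G]

theorem DifferentiableOn.eqOn_zero_of_apply_star_eq_zero_of_convex {U : Set (E × E)}
    {F : E × E → G} (hF : DifferentiableOn ℂ F U) (hUo : IsOpen U) (hUc : Convex ℝ U)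
    (hUs : ∀ p ∈ U, (star p.2, star p.1) ∈ U) (h : ∀ z, (z, star z) ∈ U → F (z, star z) = 0) :
    EqOn F 0 U := by
  rintro ⟨u, v⟩ hp
  set a : E × E := (2⁻¹ : ℂ) • ((u, v) + (star v, star u))
  set b : E × E := (-I / 2) • ((u, v) - (star v, star u))
  have ha : a ∈ U := by
    have := hUc hp (hUs _ hp) (by norm_num : (0 : ℝ) ≤ 2⁻¹) (by norm_num : (0 : ℝ) ≤ 2⁻¹)
      (by norm_num)
    convert this using 1
    simp only [a, ← coe_smul, ofReal_inv, ofReal_ofNat, smul_add]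
  have hab : a + I • b = (u, v) := by
    rw [smul_smul, show I * (-I / 2) = 2⁻¹ by rw [mul_div_assoc', mul_neg, I_mul_I]; norm_num]
    module
  have hfixed (t : ℝ) : a + (t : ℂ) • b = ((a + (t : ℂ) • b).1, star (a + (t : ℂ) • b).1) := by
    ext
    · rfl
    · simp only [a, b, Prod.fst_add, Prod.snd_add, Prod.smul_fst, Prod.smul_snd,
        Prod.fst_sub, Prod.snd_sub, star_add, star_smul, star_sub, star_star, Complex.star_def,
        map_inv₀, map_ofNat, conj_ofReal, map_div₀, map_neg, conj_I]
      module
  rw [← hab]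
  refine hF.apply_add_I_smul_eq_zero hUo hUc ha (hab ▸ hp) fun t ht => ?_
  rw [hfixed t] at ht ⊢
  exact h _ ht

theorem eventuallyEq_zero_of_apply_star_eq_zero [NormedStarGroup E] {V : Set (E × E)}
    {F : E × E → G} (hF : DifferentiableOn ℂ F V) (hVo : IsOpen V) {z₀ : E}
    (hz₀ : (z₀, star z₀) ∈ V) (h : ∀ z, (z, star z) ∈ V → F (z, star z) = 0) :
    F =ᶠ[𝓝 (z₀, star z₀)] 0 := by
  obtain ⟨r, hr, hball⟩ := Metric.isOpen_iff.1 hVo _ hz₀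
  have hstar : ∀ p ∈ Metric.ball (z₀, star z₀) r,
      (star p.2, star p.1) ∈ Metric.ball (z₀, star z₀) r := by
    intro p hp
    rw [Metric.mem_ball, Prod.dist_eq] at hp ⊢
    rwa [← star_star z₀, dist_star_star, dist_star_star, star_star, max_comm]
  exact eventuallyEq_of_mem (Metric.ball_mem_nhds _ hr)
    ((hF.mono hball).eqOn_zero_of_apply_star_eq_zero_of_convex Metric.isOpen_ball
      (convex_ball _ r) hstar fun z hz => h z (hball hz))

theorem eqOn_zero_of_apply_star_eq_zero [NormedStarGroup E] {Ω : Set E} (hΩo : IsOpen Ω)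
    (hΩc : IsPreconnected Ω) {F : E × E → G} (hF : DifferentiableOn ℂ F (Ω ×ˢ (star ⁻¹' Ω)))
    (h : ∀ z ∈ Ω, F (z, star z) = 0) : EqOn F 0 (Ω ×ˢ (star ⁻¹' Ω)) := by
  rcases Ω.eq_empty_or_nonempty with rfl | ⟨z₀, hz₀⟩
  · simp
  have hVo : IsOpen (Ω ×ˢ (star ⁻¹' Ω)) := hΩo.prod (hΩo.preimage continuous_star)
  have hz₀' : (z₀, star z₀) ∈ Ω ×ˢ (star ⁻¹' Ω) := ⟨hz₀, by simpa using hz₀⟩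
  have hstarΩ : IsPreconnected (star ⁻¹' Ω) := by
    simpa [Set.image_star] using hΩc.image star continuous_star.continuousOn
  exact hF.eqOn_zero_of_preconnected_of_eventuallyEq_zero hVo (hΩc.prod hstarΩ) hz₀'
    (eventuallyEq_zero_of_apply_star_eq_zero hF hVo hz₀' fun z hz => h z hz.1)

end Conjugation

theorem eq_zero_of_diag_zero_general {m : ℕ} (Ω : Set (Fin m → ℂ))
    (hΩo : IsOpen Ω) (hΩc : IsConnected Ω)
    (f : (Fin m → ℂ) → (Fin m → ℂ) → ℂ)
    (hf : DifferentiableOn ℂ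
      (fun p : (Fin m → ℂ) × (Fin m → ℂ) => f p.1 fun i => (starRingEnd ℂ) (p.2 i))
      (Ω ×ˢ ((fun w : Fin m → ℂ => fun i => (starRingEnd ℂ) (w i)) '' Ω)))
    (hdiag : ∀ z ∈ Ω, f z z = 0) :
    ∀ z ∈ Ω, ∀ w ∈ Ω, f z w = 0 := by
  change DifferentiableOn ℂ (fun p => f p.1 (star p.2)) (Ω ×ˢ (star '' Ω)) at hf
  rw [Set.image_star] at hf
  intro z hz w hw
  simpa using eqOn_zero_of_apply_star_eq_zero hΩo hΩc.isPreconnected hf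
    (fun z hz => by simpa using hdiag z hz)
    (mk_mem_prod hz (show star (star w) ∈ Ω by simpa using hw))

/-- If `f(z, w)` is holomorphic in `z` and antiholomorphic in `w` jointly on `Ω × Ω`
(i.e. `(z, w) ↦ f(z, w̄)` is holomorphic on `Ω × Ω*`, where `Ω* = {w̄ : w ∈ Ω}` and
the bar is componentwise conjugation) and `f(z, z) = 0` for all `z ∈ Ω`, then `f`
vanishes identically on `Ω × Ω`. -/
theorem eq_zero_of_diag_zero {m : ℕ} (Ω : Set (Fin m → ℂ)) (hne : Ω.Nonempty)
    (hΩo : IsOpen Ω) (hΩc : IsConnected Ω) (hΩb : Bornology.IsBounded Ω)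
    (f : (Fin m → ℂ) → (Fin m → ℂ) → ℂ)
    (hf : DifferentiableOn ℂ
      (fun p : (Fin m → ℂ) × (Fin m → ℂ) => f p.1 fun i => (starRingEnd ℂ) (p.2 i))
      (Ω ×ˢ ((fun w : Fin m → ℂ => fun i => (starRingEnd ℂ) (w i)) '' Ω)))
    (hdiag : ∀ z ∈ Ω, f z z = 0) :
    ∀ z ∈ Ω, ∀ w ∈ Ω, f z w = 0 :=
  eq_zero_of_diag_zero_general Ω hΩo hΩc f hf hdiag
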